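/- With M and a as above, the partial derivative M_y satisfies M_y = −(p − at)/√(1+a²). -/

import Mathlib

open Real MeasureTheory Set Filter

noncomputable def phi (s : ℝ) : ℝ := Real.exp (-s ^ 2 / 2) / Real.sqrt (2 * Real.pi)

noncomputable def Phi (t : ℝ) : ℝ := ∫ s in Set.Iic t, phi s

noncomputable def GaussI (x : ℝ) : ℝ :=
  if 0 < x ∧ x < 1 then phi (Function.invFun Phi x) else 0

noncomputable def M (a : ℝ → ℝ → ℝ → ℝ) (t p y : ℝ) : ℝ :=
  phi ((p - a t p y * t) / Real.sqrt (1 + (a t p y) ^ 2)) *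
    Phi ((t + a t p y * p) / Real.sqrt (1 + (a t p y) ^ 2))

/-!
Put `Y(α) = ∫_{-∞}^t Φ(α(s-t)+p) φ(s) ds` and `F(α) = φ(X) Φ(K)`, where `(K, X)` is `(t, p)`
rotated by the angle `arctan α`; then `a(t,p,·)` inverts `Y` and `M = F ∘ a`. Completing the
square, `φ(α(s-t)+p) φ(s) = φ(X) φ(√(1+α²)(s-t)+K)`, which integrates in closed form to
`Y'(α) = -φ(X) (φ(K) + K Φ(K)) / (1+α²) < 0`. Differentiating `F` directly gives
`F'(α) = -X Y'(α)`, so `M_y = F'(a) / Y'(a) = -X`.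
-/

open ProbabilityTheory Topology

lemma phi_eq_gaussianPDFReal : phi = gaussianPDFReal 0 1 := by
  funext s
  simp [phi, gaussianPDFReal, div_eq_inv_mul]

lemma Phi_eq_cdf_gaussianReal : Phi = cdf (gaussianReal 0 1) := by
  funext x
  rw [cdf_eq_real, measureReal_def, gaussianReal_apply_eq_integral _ one_ne_zero,
    ENNReal.toReal_ofReal
      (setIntegral_nonneg measurableSet_Iic fun s _ => gaussianPDFReal_nonneg _ _ s),
    Phi, phi_eq_gaussianPDFReal]

lemma phi_pos (s : ℝ) : 0 < phi s := by
  unfold phi; positivity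

lemma phi_le_one (s : ℝ) : phi s ≤ 1 := by
  rw [phi, div_le_one (by positivity)]
  calc rexp (-s ^ 2 / 2) ≤ 1 := exp_le_one_iff.2 (by nlinarith [sq_nonneg s])
    _ ≤ √(2 * π) := one_le_sqrt.2 (by nlinarith [pi_gt_three])

@[fun_prop]
lemma continuous_phi : Continuous phi := by
  unfold phi; fun_prop

lemma integrable_phi : Integrable phi :=
  phi_eq_gaussianPDFReal ▸ integrable_gaussianPDFReal 0 1

lemma integrable_mul_phi : Integrable fun s => s * phi s := by
  refine ((integrable_mul_exp_neg_mul_sq (b := 1 / 2) (by norm_num)).div_const √(2 * π)).congr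
    (ae_of_all _ fun s => ?_)
  simp only [phi]
  ring_nf

lemma hasDerivAt_phi (s : ℝ) : HasDerivAt phi (-s * phi s) s := by
  have hsq : HasDerivAt (fun s : ℝ => -s ^ 2 / 2) (-s) s :=
    ((hasDerivAt_pow 2 s).neg.div_const 2).congr_deriv (by ring)
  exact (hsq.exp.div_const √(2 * π)).congr_deriv (by rw [phi]; ring)

lemma tendsto_phi_atBot : Tendsto phi atBot (𝓝 0) := by
  unfold phi
  have hsq : Tendsto (fun s : ℝ => -s ^ 2 / 2) atBot atBot :=
    (tendsto_neg_atTop_atBot.comp ((tendsto_pow_atTop two_ne_zero).comp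
      tendsto_neg_atBot_atTop)).atBot_div_const two_pos |>.congr fun s => by simp
  simpa using (tendsto_exp_atBot.comp hsq).div_const √(2 * π)

lemma Phi_nonneg (x : ℝ) : 0 ≤ Phi x := Phi_eq_cdf_gaussianReal ▸ cdf_nonneg _ x

lemma Phi_le_one (x : ℝ) : Phi x ≤ 1 := Phi_eq_cdf_gaussianReal ▸ cdf_le_one _ x

lemma tendsto_Phi_atBot : Tendsto Phi atBot (𝓝 0) :=
  Phi_eq_cdf_gaussianReal ▸ tendsto_cdf_atBot _

lemma hasDerivAt_Phi (x : ℝ) : HasDerivAt Phi (phi x) x := by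
  have hPhi : ∀ z, Phi z = Phi x + ∫ s in x..z, phi s := fun z => by
    rw [← intervalIntegral.integral_Iic_sub_Iic integrable_phi.integrableOn
      integrable_phi.integrableOn, Phi, Phi, add_sub_cancel]
  rw [funext hPhi]
  exact (intervalIntegral.integral_hasDerivAt_right integrable_phi.intervalIntegrable
    integrable_phi.1.stronglyMeasurableAtFilter continuous_phi.continuousAt).const_add _

@[fun_prop]
lemma continuous_Phi : Continuous Phi :=
  continuous_iff_continuousAt.2 fun x => (hasDerivAt_Phi x).continuousAt

lemma hasDerivAt_phi_add_const_mul_Phi (c u : ℝ) :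
    HasDerivAt (fun u => phi u + c * Phi u) ((c - u) * phi u) u :=
  ((hasDerivAt_phi u).add ((hasDerivAt_Phi u).const_mul c)).congr_deriv (by ring)

/-- `(rotFst t p α, rotSnd t p α)` is `(t, p)` rotated clockwise by the angle `arctan α`. -/
noncomputable def rotFst (t p α : ℝ) : ℝ := (t + α * p) / √(1 + α ^ 2)

noncomputable def rotSnd (t p α : ℝ) : ℝ := (p - α * t) / √(1 + α ^ 2)

lemma sqrt_one_add_sq_pos (α : ℝ) : 0 < √(1 + α ^ 2) := by positivity

lemma sq_sqrt_one_add_sq (α : ℝ) : √(1 + α ^ 2) ^ 2 = 1 + α ^ 2 := sq_sqrt (by positivity)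

lemma hasDerivAt_sqrt_one_add_sq (α : ℝ) :
    HasDerivAt (fun β : ℝ => √(1 + β ^ 2)) (α / √(1 + α ^ 2)) α := by
  have := ((hasDerivAt_pow 2 α).const_add 1).sqrt (by positivity)
  exact this.congr_deriv (by push_cast; ring)

lemma hasDerivAt_rotFst (t p α : ℝ) :
    HasDerivAt (rotFst t p) (rotSnd t p α / (1 + α ^ 2)) α := by
  have hb := sq_sqrt_one_add_sq α
  have := ((hasDerivAt_mul_const p).const_add t).div (hasDerivAt_sqrt_one_add_sq α)
    (sqrt_one_add_sq_pos α).ne'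
  refine this.congr_deriv ?_
  rw [rotSnd]
  field_simp
  linear_combination (α * (p * α + t)) * hb

lemma hasDerivAt_rotSnd (t p α : ℝ) :
    HasDerivAt (rotSnd t p) (-rotFst t p α / (1 + α ^ 2)) α := by
  have hb := sq_sqrt_one_add_sq α
  have := ((hasDerivAt_mul_const t).const_sub p).div (hasDerivAt_sqrt_one_add_sq α)
    (sqrt_one_add_sq_pos α).ne'
  refine this.congr_deriv ?_
  rw [rotFst]
  field_simp
  linear_combination (-(α * (t * α - p))) * hb

lemma phi_mul_phi_eq (t p α s : ℝ) :
    phi (α * (s - t) + p) * phi s =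
      phi (rotSnd t p α) * phi (√(1 + α ^ 2) * (s - t) + rotFst t p α) := by
  have hb := sq_sqrt_one_add_sq α
  have hb0 := (sqrt_one_add_sq_pos α).ne'
  simp only [phi, rotFst, rotSnd, div_mul_div_comm, ← exp_add]
  congr 2
  field_simp
  linear_combination ((s - t) ^ 2 * √(1 + α ^ 2) ^ 2 - (t ^ 2 + p ^ 2)) * hb

noncomputable def yOfSlope (t p α : ℝ) : ℝ := ∫ s in Iic t, Phi (α * (s - t) + p) * phi s

noncomputable def yOfSlopeDeriv (t p α : ℝ) : ℝ :=
  ∫ s in Iic t, (s - t) * phi (α * (s - t) + p) * phi s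

noncomputable def mOfSlope (t p α : ℝ) : ℝ := phi (rotSnd t p α) * Phi (rotFst t p α)

lemma integrable_sub_mul_phi (t : ℝ) : Integrable fun s => (s - t) * phi s :=
  (integrable_mul_phi.sub (integrable_phi.const_mul t)).congr (ae_of_all _ fun s => by
    simp only [Pi.sub_apply]; ring)

lemma norm_sub_mul_phi_mul_phi_le (t p α s : ℝ) :
    ‖(s - t) * phi (α * (s - t) + p) * phi s‖ ≤ ‖(s - t) * phi s‖ := by
  rw [mul_right_comm, norm_mul ((s - t) * phi s)]
  refine mul_le_of_le_one_right (norm_nonneg _) ?_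
  rw [Real.norm_of_nonneg (phi_pos _).le]
  exact phi_le_one _

lemma integrable_sub_mul_phi_mul_phi (t p α : ℝ) :
    Integrable fun s => (s - t) * phi (α * (s - t) + p) * phi s :=
  (integrable_sub_mul_phi t).norm.mono' (by fun_prop)
    (ae_of_all _ (norm_sub_mul_phi_mul_phi_le t p α))

lemma hasDerivAt_yOfSlope (t p α : ℝ) : HasDerivAt (yOfSlope t p) (yOfSlopeDeriv t p α) α := by
  have hPhi_le : ∀ β s, ‖Phi (β * (s - t) + p) * phi s‖ ≤ phi s := fun β s => by
    rw [norm_mul, Real.norm_of_nonneg (Phi_nonneg _), Real.norm_of_nonneg (phi_pos _).le]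
    exact mul_le_of_le_one_left (phi_pos _).le (Phi_le_one _)
  refine (hasDerivAt_integral_of_dominated_loc_of_deriv_le (μ := volume.restrict (Iic t))
    (F' := fun β s => (s - t) * phi (β * (s - t) + p) * phi s)
    (bound := fun s => ‖(s - t) * phi s‖)
    univ_mem (.of_forall fun β => by fun_prop)
    (integrable_phi.integrableOn.mono' (by fun_prop) (ae_of_all _ (hPhi_le α)))
    (by fun_prop) (ae_of_all _ fun s β _ => norm_sub_mul_phi_mul_phi_le t p β s)
    (integrable_sub_mul_phi t).norm.integrableOn (ae_of_all _ fun s β _ => ?_)).2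
  have hlin : HasDerivAt (fun β : ℝ => β * (s - t) + p) (s - t) β :=
    (hasDerivAt_mul_const (s - t)).add_const p
  exact (((hasDerivAt_Phi _).comp β hlin).mul_const (phi s)).congr_deriv (by ring)

lemma yOfSlopeDeriv_eq (t p α : ℝ) :
    yOfSlopeDeriv t p α = -(phi (rotSnd t p α) *
      (phi (rotFst t p α) + rotFst t p α * Phi (rotFst t p α))) / (1 + α ^ 2) := by
  have hb := sq_sqrt_one_add_sq α
  have hb0 := (sqrt_one_add_sq_pos α).ne'
  set b := √(1 + α ^ 2) with hb_def
  set K := rotFst t p α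
  set H : ℝ → ℝ := fun s =>
    -(phi (rotSnd t p α) * (phi (b * (s - t) + K) + K * Phi (b * (s - t) + K))) / (1 + α ^ 2)
  have hH : ∀ s, HasDerivAt H ((s - t) * phi (α * (s - t) + p) * phi s) s := fun s => by
    have hlin : HasDerivAt (fun s => b * (s - t) + K) b s :=
      (((hasDerivAt_id s).sub_const t).const_mul b).add_const K |>.congr_deriv (mul_one b)
    refine (((hasDerivAt_phi_add_const_mul_Phi K _).comp s hlin).const_mul _ |>.neg.div_const _)
      |>.congr_deriv ?_
    rw [mul_assoc _ (phi (α * _ + p)), phi_mul_phi_eq, ← hb_def]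
    field_simp
    linear_combination (phi (rotSnd t p α) * (s - t) * phi (b * (s - t) + K)) * hb
  have hu : Tendsto (fun s => b * (s - t) + K) atBot atBot :=
    tendsto_atBot_add_const_right _ K
      ((tendsto_atBot_add_const_right _ (-t) tendsto_id).const_mul_atBot (sqrt_one_add_sq_pos α))
  have hH_atBot : Tendsto H atBot (𝓝 0) := by
    have := (tendsto_phi_atBot.comp hu).add ((tendsto_Phi_atBot.comp hu).const_mul K)
    simpa using (this.const_mul (phi (rotSnd t p α))).neg.div_const (1 + α ^ 2)
  rw [yOfSlopeDeriv, integral_Iic_of_hasDerivAt_of_tendsto' (fun s _ => hH s)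
    (integrable_sub_mul_phi_mul_phi t p α).integrableOn hH_atBot]
  simp [H]

lemma yOfSlopeDeriv_neg (t p α : ℝ) : yOfSlopeDeriv t p α < 0 := by
  set g := fun s => (t - s) * phi (α * (s - t) + p) * phi s
  have hg : yOfSlopeDeriv t p α = -∫ s in Iic t, g s := by
    rw [yOfSlopeDeriv, ← integral_neg]
    congr 1 with s
    ring
  have hg_int : IntegrableOn g (Iic t) :=
    (integrable_sub_mul_phi_mul_phi t p α).neg.integrableOn.congr_fun (fun s _ => by
      simp only [g, Pi.neg_apply]; ring) measurableSet_Iic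
  have hg_nonneg : 0 ≤ᵐ[volume.restrict (Iic t)] g :=
    (ae_restrict_iff' measurableSet_Iic).2 (ae_of_all _ fun s (hs : s ≤ t) =>
      mul_nonneg (mul_nonneg (sub_nonneg.2 hs) (phi_pos _).le) (phi_pos _).le)
  have hsupp : Iio t ⊆ Function.support g ∩ Iic t := fun s (hs : s < t) =>
    ⟨(mul_pos (mul_pos (sub_pos.2 hs) (phi_pos _)) (phi_pos _)).ne', hs.le⟩
  rw [hg, neg_lt_zero, setIntegral_pos_iff_support_of_nonneg_ae hg_nonneg hg_int]
  exact (by simp : (0 : ENNReal) < volume (Iio t)).trans_le (measure_mono hsupp)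

lemma hasDerivAt_mOfSlope (t p α : ℝ) :
    HasDerivAt (mOfSlope t p) (-rotSnd t p α * yOfSlopeDeriv t p α) α := by
  have h := ((hasDerivAt_phi _).comp α (hasDerivAt_rotSnd t p α)).mul
    ((hasDerivAt_Phi _).comp α (hasDerivAt_rotFst t p α))
  refine h.congr_deriv ?_
  rw [yOfSlopeDeriv_eq]
  simp only [Function.comp_apply]
  field_simp
  ring

lemma StrictAnti.continuousAt_of_eventually_rightInverse {α β : Type*}
    [LinearOrder α] [TopologicalSpace α] [OrderTopology α]
    [LinearOrder β] [TopologicalSpace β] [OrderTopology β]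
    {f : α → β} {g : β → α} {y : β} (hf : StrictAnti f) (hfg : ∀ᶠ z in 𝓝 y, f (g z) = z) :
    ContinuousAt g y := by
  refine tendsto_order.2 ⟨fun x hx => ?_, fun x hx => ?_⟩
  · filter_upwards [hfg, eventually_lt_nhds (hfg.self_of_nhds ▸ hf hx)] with z hz hzx
    exact hf.lt_iff_gt.1 (by rwa [hz])
  · filter_upwards [hfg, eventually_gt_nhds (hfg.self_of_nhds ▸ hf hx)] with z hz hzx
    exact hf.lt_iff_gt.1 (by rwa [hz])

theorem stmt_11 (a : ℝ → ℝ → ℝ → ℝ)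
    (ha : ∀ t p y : ℝ, 0 < y → y < Phi t →
      ∫ s in Set.Iic t, Phi (a t p y * (s - t) + p) * phi s = y)
    (t p y : ℝ) (hy0 : 0 < y) (hy1 : y < Phi t) (My : ℝ)
    (hMy : HasDerivAt (fun y' => M a t p y') My y) :
    My = -(p - a t p y * t) / Real.sqrt (1 + (a t p y) ^ 2) := by
  have hdy_ne := (yOfSlopeDeriv_neg t p (a t p y)).ne
  have hanti : StrictAnti (yOfSlope t p) :=
    strictAnti_of_deriv_neg fun α =>
      (hasDerivAt_yOfSlope t p α).deriv ▸ yOfSlopeDeriv_neg t p α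
  have hinv : ∀ᶠ y' in 𝓝 y, yOfSlope t p (a t p y') = y' :=
    eventually_of_mem (Ioo_mem_nhds hy0 hy1) fun y' hy' => ha t p y' hy'.1 hy'.2
  have hda : HasDerivAt (a t p) (yOfSlopeDeriv t p (a t p y))⁻¹ y :=
    (hasDerivAt_yOfSlope t p _).of_local_left_inverse
      (hanti.continuousAt_of_eventually_rightInverse hinv) hdy_ne hinv
  -- `M a t p` is `mOfSlope t p ∘ a t p` by definition.
  have hM : HasDerivAt (fun y' => M a t p y') (-rotSnd t p (a t p y)) y :=
    ((hasDerivAt_mOfSlope t p _).comp y hda).congr_deriv (by field_simp)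
  rw [hMy.unique hM, rotSnd, neg_div]
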